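/- Let (Ω, 𝓕, ℙ) be a probability space and 𝓖 ⊆ 𝓕 a sub-σ-algebra. Let t₀ ≤ t ≤ T be reals and let r : [t₀,∞) × Ω → [0,∞) be a jointly measurable process whose paths u ↦ r(u,ω) are right-continuous, and such that E[ sup_{u ∈ [t₀,S]} r(u) ] < ∞ for every S > t₀. Then for every sequence (hₙ) of positive reals with hₙ → 0, almost surely lim_{n→∞} (1/hₙ)·( E[ exp(−∫ₜ^{T+hₙ} r(u) du) | 𝓖 ] − E[ exp(−∫ₜ^T r(u) du) | 𝓖 ] ) = − E[ r(T)·exp(−∫ₜ^T r(u) du) | 𝓖 ]. -/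

import Mathlib

open MeasureTheory Filter

lemma aux_tendsto_condexp
    {Ω : Type*} {m0 : MeasurableSpace Ω} (μ : Measure Ω) [IsProbabilityMeasure μ]
    (m : MeasurableSpace Ω) (hm : m ≤ m0)
    (F : ℕ → Ω → ℝ) (Fl : Ω → ℝ) (bound : Ω → ℝ)
    (hF_meas : ∀ n, AEStronglyMeasurable[m0] (F n) μ)
    (hbound : Integrable bound μ)
    (hdom : ∀ n, ∀ᵐ ω ∂μ, |F n ω| ≤ bound ω)
    (hconv : ∀ᵐ ω ∂μ, Tendsto (fun n => F n ω) atTop (nhds (Fl ω))) :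
    ∀ᵐ ω ∂μ, Tendsto (fun n => (μ[F n|m]) ω) atTop (nhds ((μ[Fl|m]) ω)) := by
  have hFl_meas : AEStronglyMeasurable[m0] Fl μ :=
    aestronglyMeasurable_of_tendsto_ae atTop (fun n => hF_meas n) hconv
  have hdom_all : ∀ᵐ ω ∂μ, ∀ n, |F n ω| ≤ bound ω := ae_all_iff.2 hdom
  have hFl_dom : ∀ᵐ ω ∂μ, |Fl ω| ≤ bound ω := by
    filter_upwards [hdom_all, hconv] with ω h1 h2
    exact le_of_tendsto ((continuous_abs.tendsto _).comp h2) (Eventually.of_forall h1)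
  have hF_int : ∀ n, Integrable (F n) μ := fun n =>
    Integrable.mono' hbound (hF_meas n) <| by
      filter_upwards [hdom n] with ω hω; simpa [Real.norm_eq_abs] using hω
  have hFl_int : Integrable Fl μ :=
    Integrable.mono' hbound hFl_meas <| by
      filter_upwards [hFl_dom] with ω hω; simpa [Real.norm_eq_abs] using hω
  -- the dominating sequence
  set g : ℕ → Ω → ENNReal := fun n ω => ⨆ k, ENNReal.ofReal |F (n + k) ω - Fl ω| with hg
  set G : ℕ → Ω → ℝ := fun n ω => (g n ω).toReal with hG
  have hg_meas : ∀ n, AEMeasurable (g n) μ := by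
    intro n
    refine AEMeasurable.iSup fun k => ?_
    have : (fun ω => ENNReal.ofReal |F (n + k) ω - Fl ω|) =
        fun ω => ENNReal.ofReal ‖F (n + k) ω - Fl ω‖ := by
      simp [Real.norm_eq_abs]
    rw [this]
    exact (((hF_meas (n + k)).sub hFl_meas).norm).aemeasurable.ennreal_ofReal
  have hG_meas : ∀ n, AEStronglyMeasurable[m0] (G n) μ := fun n =>
    ((hg_meas n).ennreal_toReal).aestronglyMeasurable
  have hG_nonneg : ∀ n ω, 0 ≤ G n ω := fun n ω => ENNReal.toReal_nonneg
  -- a.e. bound on g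
  have hg_le : ∀ᵐ ω ∂μ, ∀ n, g n ω ≤ ENNReal.ofReal (2 * bound ω) := by
    filter_upwards [hdom_all, hFl_dom] with ω h1 h2
    intro n
    refine iSup_le fun k => ENNReal.ofReal_le_ofReal ?_
    calc |F (n + k) ω - Fl ω| ≤ |F (n + k) ω| + |Fl ω| := abs_sub _ _
      _ ≤ 2 * bound ω := by linarith [h1 (n + k)]
  have hG_le : ∀ᵐ ω ∂μ, ∀ n, G n ω ≤ 2 * bound ω := by
    filter_upwards [hg_le, hdom 0] with ω h1 h0
    intro n
    have hb : 0 ≤ bound ω := le_trans (abs_nonneg _) h0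
    calc G n ω ≤ (ENNReal.ofReal (2 * bound ω)).toReal :=
          ENNReal.toReal_mono ENNReal.ofReal_ne_top (h1 n)
      _ = 2 * bound ω := ENNReal.toReal_ofReal (by linarith)
  have hG_int : ∀ n, Integrable (G n) μ := fun n =>
    Integrable.mono' (hbound.const_mul 2) (hG_meas n) <| by
      filter_upwards [hG_le] with ω hω
      simpa [Real.norm_eq_abs, abs_of_nonneg (hG_nonneg n ω)] using hω n
  -- |F n - Fl| ≤ G n a.e.
  have h_le_G : ∀ᵐ ω ∂μ, ∀ n, |F n ω - Fl ω| ≤ G n ω := by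
    filter_upwards [hg_le] with ω h1
    intro n
    have h2 : ENNReal.ofReal |F n ω - Fl ω| ≤ g n ω := by
      simpa using le_iSup (fun k => ENNReal.ofReal |F (n + k) ω - Fl ω|) 0
    have h3 : g n ω ≠ ⊤ := (lt_of_le_of_lt (h1 n) ENNReal.ofReal_lt_top).ne
    calc |F n ω - Fl ω| = (ENNReal.ofReal |F n ω - Fl ω|).toReal :=
          (ENNReal.toReal_ofReal (abs_nonneg _)).symm
      _ ≤ G n ω := ENNReal.toReal_mono h3 h2
  -- G antitone a.e.
  have hG_anti : ∀ᵐ ω ∂μ, ∀ n, G (n + 1) ω ≤ G n ω := by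
    filter_upwards [hg_le] with ω h1
    intro n
    refine ENNReal.toReal_mono (lt_of_le_of_lt (h1 n) ENNReal.ofReal_lt_top).ne ?_
    refine iSup_le fun k => ?_
    have := le_iSup (fun k => ENNReal.ofReal |F (n + k) ω - Fl ω|) (k + 1)
    simpa [add_assoc, add_comm 1 k] using this
  -- G → 0 a.e.
  have hG_tendsto : ∀ᵐ ω ∂μ, Tendsto (fun n => G n ω) atTop (nhds 0) := by
    filter_upwards [hconv, hg_le] with ω h1 h2
    rw [tendsto_order]
    constructor
    · intro a ha
      exact Eventually.of_forall fun n => lt_of_lt_of_le ha (hG_nonneg n ω)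
    · intro a ha
      have h3 : ∀ᶠ n in atTop, |F n ω - Fl ω| < a / 2 := by
        have := Metric.tendsto_atTop.1 h1 (a / 2) (by linarith)
        obtain ⟨N, hN⟩ := this
        exact eventually_atTop.2 ⟨N, fun n hn => by
          simpa [Real.dist_eq] using hN n hn⟩
      obtain ⟨N, hN⟩ := eventually_atTop.1 h3
      refine eventually_atTop.2 ⟨N, fun n hn => ?_⟩
      have h4 : g n ω ≤ ENNReal.ofReal (a / 2) := by
        refine iSup_le fun k => ENNReal.ofReal_le_ofReal ?_
        exact le_of_lt (hN (n + k) (le_trans hn (Nat.le_add_right n k)))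
      calc G n ω ≤ (ENNReal.ofReal (a / 2)).toReal :=
            ENNReal.toReal_mono ENNReal.ofReal_ne_top h4
        _ = a / 2 := ENNReal.toReal_ofReal (by linarith)
        _ < a := by linarith
  -- ∫ G n → 0
  have hint_tendsto : Tendsto (fun n => ∫ ω, G n ω ∂μ) atTop (nhds 0) := by
    have := tendsto_integral_of_dominated_convergence (fun ω => 2 * bound ω)
      hG_meas (hbound.const_mul 2)
      (fun n => by
        filter_upwards [hG_le] with ω hω
        simpa [Real.norm_eq_abs, abs_of_nonneg (hG_nonneg n ω)] using hω n)
      hG_tendsto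
    simpa using this
  -- conditional expectations of G
  set c : ℕ → Ω → ℝ := fun n => μ[G n|m] with hc
  have hc_nonneg : ∀ n, ∀ᵐ ω ∂μ, 0 ≤ c n ω :=
    fun n => condExp_nonneg (Eventually.of_forall (hG_nonneg n))
  have hc_anti : ∀ n, ∀ᵐ ω ∂μ, c (n + 1) ω ≤ c n ω := fun n =>
    condExp_mono (hG_int (n + 1)) (hG_int n) <| by
      filter_upwards [hG_anti] with ω hω using hω n
  have hc_int : ∀ n, Integrable (c n) μ := fun n => integrable_condExp
  have hc_integral : ∀ n, ∫ ω, c n ω ∂μ = ∫ ω, G n ω ∂μ := fun n =>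
    integral_condExp hm
  -- c n → L := ⨅ c n, a.e.
  set L : Ω → ℝ := fun ω => ⨅ n, c n ω with hL
  have hgood : ∀ᵐ ω ∂μ, (∀ n, 0 ≤ c n ω) ∧ (∀ n, c (n + 1) ω ≤ c n ω) :=
    (ae_all_iff.2 hc_nonneg).and (ae_all_iff.2 hc_anti)
  have hcL : ∀ᵐ ω ∂μ, Tendsto (fun n => c n ω) atTop (nhds (L ω)) ∧
      (∀ n, L ω ≤ c n ω) ∧ 0 ≤ L ω := by
    filter_upwards [hgood] with ω ⟨h0, h1⟩
    have hanti : Antitone fun n => c n ω := antitone_nat_of_succ_le h1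
    have hbdd : BddBelow (Set.range fun n => c n ω) := ⟨0, by rintro x ⟨n, rfl⟩; exact h0 n⟩
    exact ⟨tendsto_atTop_ciInf hanti hbdd, fun n => ciInf_le hbdd n,
      le_ciInf fun n => h0 n⟩
  -- ∫⁻ ofReal L = 0 so L = 0 a.e.
  have hL_meas : AEMeasurable L μ := by
    refine AEMeasurable.iInf fun n => ?_
    exact ((stronglyMeasurable_condExp (f := G n)).mono hm).measurable.aemeasurable
  have hL_lint : ∀ n, (∫⁻ ω, ENNReal.ofReal (L ω) ∂μ) ≤ ENNReal.ofReal (∫ ω, G n ω ∂μ) := by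
    intro n
    have h1 : (∫⁻ ω, ENNReal.ofReal (L ω) ∂μ) ≤ ∫⁻ ω, ENNReal.ofReal (c n ω) ∂μ := by
      refine lintegral_mono_ae ?_
      filter_upwards [hcL] with ω ⟨_, h2, _⟩
      exact ENNReal.ofReal_le_ofReal (h2 n)
    have h2 : (∫⁻ ω, ENNReal.ofReal (c n ω) ∂μ) = ENNReal.ofReal (∫ ω, c n ω ∂μ) :=
      (ofReal_integral_eq_lintegral_ofReal (hc_int n)
        (by filter_upwards [hc_nonneg n] with ω h using h)).symm
    calc (∫⁻ ω, ENNReal.ofReal (L ω) ∂μ)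
        ≤ ∫⁻ ω, ENNReal.ofReal (c n ω) ∂μ := h1
      _ = ENNReal.ofReal (∫ ω, c n ω ∂μ) := h2
      _ = ENNReal.ofReal (∫ ω, G n ω ∂μ) := by rw [hc_integral n]
  have hL_zero : (∫⁻ ω, ENNReal.ofReal (L ω) ∂μ) = 0 := by
    have h1 : Tendsto (fun n => ENNReal.ofReal (∫ ω, G n ω ∂μ)) atTop (nhds 0) := by
      have := (ENNReal.continuous_ofReal.tendsto 0).comp hint_tendsto
      rw [ENNReal.ofReal_zero] at this
      exact this
    exact le_antisymm (ge_of_tendsto' h1 hL_lint) (zero_le)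
  have hL_ae : ∀ᵐ ω ∂μ, L ω ≤ 0 := by
    have := (lintegral_eq_zero_iff' hL_meas.ennreal_ofReal).1 hL_zero
    filter_upwards [this] with ω hω
    simpa [ENNReal.ofReal_eq_zero] using hω
  have hc_tendsto0 : ∀ᵐ ω ∂μ, Tendsto (fun n => c n ω) atTop (nhds 0) := by
    filter_upwards [hcL, hL_ae] with ω ⟨h1, _, h3⟩ h4
    have : L ω = 0 := le_antisymm h4 h3
    rwa [this] at h1
  -- |μ[F n|m] - μ[Fl|m]| ≤ c n a.e.
  have hkey : ∀ n, ∀ᵐ ω ∂μ, |(μ[F n|m]) ω - (μ[Fl|m]) ω| ≤ c n ω := by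
    intro n
    set D : Ω → ℝ := fun ω => |F n ω - Fl ω| with hD
    have hsub : μ[F n - Fl|m] =ᵐ[μ] μ[F n|m] - μ[Fl|m] := condExp_sub (hF_int n) hFl_int m
    have habs_int : Integrable D μ := ((hF_int n).sub hFl_int).abs
    have h1 : μ[F n - Fl|m] ≤ᵐ[μ] μ[D|m] :=
      condExp_mono ((hF_int n).sub hFl_int) habs_int
        (Eventually.of_forall fun ω => le_abs_self _)
    have h2 : μ[-(F n - Fl)|m] ≤ᵐ[μ] μ[D|m] :=
      condExp_mono ((hF_int n).sub hFl_int).neg habs_int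
        (Eventually.of_forall fun ω => neg_le_abs _)
    have h3 : μ[-(F n - Fl)|m] =ᵐ[μ] -μ[F n - Fl|m] := condExp_neg _ _
    have h4 : μ[D|m] ≤ᵐ[μ] c n :=
      condExp_mono habs_int (hG_int n) (by
        filter_upwards [h_le_G] with ω hω using hω n)
    filter_upwards [hsub, h1, h2, h3, h4] with ω e1 e2 e3 e4 e5
    have k1 : (μ[F n|m]) ω - (μ[Fl|m]) ω ≤ c n ω := by
      have := e2.trans e5
      rw [e1] at this
      simpa [Pi.sub_apply] using this
    have k2 : -((μ[F n|m]) ω - (μ[Fl|m]) ω) ≤ c n ω := by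
      have := e4.symm.trans_le (e3.trans e5)
      simp only [Pi.neg_apply] at this
      rw [e1] at this
      simp only [Pi.sub_apply] at this
      linarith
    rw [abs_le]
    constructor <;> linarith
  filter_upwards [ae_all_iff.2 hkey, hc_tendsto0] with ω h1 h2
  rw [tendsto_iff_dist_tendsto_zero]
  refine squeeze_zero (fun n => dist_nonneg) (fun n => ?_) h2
  rw [Real.dist_eq]
  exact h1 n

theorem bond_aux
    {Ω : Type*} (m : MeasurableSpace Ω) [m0 : MeasurableSpace Ω] (hm : m ≤ m0)
    (μ : Measure Ω) [IsProbabilityMeasure μ]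
    (t₀ t T : ℝ) (ht₀ : t₀ ≤ t) (htT : t ≤ T)
    (r : ℝ → Ω → ℝ)
    (hr_meas : Measurable (Function.uncurry r))
    (hr_nonneg : ∀ u ω, 0 ≤ r u ω)
    (hr_rightcont : ∀ ω : Ω, ∀ u ≥ t₀,
      ContinuousWithinAt (fun v => r v ω) (Set.Ici u) u)
    (hr_int : ∀ S > t₀,
      (∫⁻ ω, ⨆ u ∈ Set.Icc t₀ S, ENNReal.ofReal (r u ω) ∂μ) < ⊤) :
    ∀ h : ℕ → ℝ, (∀ n, 0 < h n) → Tendsto h atTop (nhds 0) →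
      ∀ᵐ ω ∂μ, Tendsto (fun n =>
        (1 / h n) *
          ((μ[fun ω' => Real.exp (-∫ u in t..(T + h n), r u ω')|m]) ω -
            (μ[fun ω' => Real.exp (-∫ u in t..T, r u ω')|m]) ω))
        atTop
        (nhds (-(μ[fun ω' => r T ω' * Real.exp (-∫ u in t..T, r u ω')|m]) ω)) := by
  intro h hpos hlim
  -- a uniform bound on h
  obtain ⟨C₀, hC₀⟩ := hlim.bddAbove_range
  set C : ℝ := max C₀ 1 with hCdef
  have hC1 : (1 : ℝ) ≤ C := le_max_right _ _
  have hhC : ∀ n, h n ≤ C := fun n =>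
    le_trans (hC₀ ⟨n, rfl⟩) (le_max_left _ _)
  set S : ℝ := T + C with hSdef
  have ht₀T : t₀ ≤ T := ht₀.trans htT
  have hTS : T ≤ S := by simp only [hSdef]; linarith
  have ht₀S : t₀ < S := by simp only [hSdef]; linarith
  have htS : t ≤ S := htT.trans hTS
  have hTh : ∀ n, T + h n ≤ S := fun n => by
    simp only [hSdef]; linarith [hhC n]
  -- section measurability
  have hsec : ∀ ω, Measurable fun u => r u ω := fun ω =>
    hr_meas.comp (measurable_id.prodMk measurable_const)
  have hsecω : ∀ u, Measurable fun ω => r u ω := fun u =>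
    hr_meas.comp (measurable_const.prodMk measurable_id)
  -- the measurable dominating envelope
  set Mfun : Ω → ENNReal := fun ω =>
    ENNReal.ofReal (r S ω) ⊔
      ⨆ q : {q : ℚ // (q : ℝ) ∈ Set.Icc t₀ S}, ENNReal.ofReal (r (q : ℝ) ω) with hMfun
  have hMfun_meas : Measurable Mfun :=
    ((hsecω S).ennreal_ofReal).sup (Measurable.iSup fun q => (hsecω _).ennreal_ofReal)
  have hMle : ∀ ω, ∀ u ∈ Set.Icc t₀ S, ENNReal.ofReal (r u ω) ≤ Mfun ω := by
    intro ω u hu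
    rcases eq_or_lt_of_le hu.2 with heq | hlt
    · rw [heq]; exact le_sup_left
    · set Q : ENNReal := ⨆ q : {q : ℚ // (q : ℝ) ∈ Set.Icc t₀ S},
        ENNReal.ofReal (r (q : ℝ) ω) with hQdef
      by_cases hQ : Q = ⊤
      · have : Mfun ω = ⊤ := by
          rw [hMfun]; simp only [← hQdef, hQ]; exact top_le_iff.1 le_sup_right
        rw [this]; exact le_top
      · have hle : r u ω ≤ Q.toReal := by
          by_contra hgt
          push_neg at hgt
          have hrc := hr_rightcont ω u hu.1
          have hev : ∀ᶠ v in nhdsWithin u (Set.Ici u), Q.toReal < r v ω :=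
            hrc.eventually (lt_mem_nhds hgt)
          obtain ⟨u', hu', hsub⟩ := mem_nhdsGE_iff_exists_Ico_subset.1 hev
          obtain ⟨q, hq1, hq2⟩ := exists_rat_btwn (lt_min (Set.mem_Ioi.1 hu') hlt)
          have hqS : (q : ℝ) < S := lt_of_lt_of_le hq2 (min_le_right _ _)
          have hqIcc : (q : ℝ) ∈ Set.Icc t₀ S := ⟨hu.1.trans hq1.le, hqS.le⟩
          have hqIco : (q : ℝ) ∈ Set.Ico u u' :=
            ⟨hq1.le, lt_of_lt_of_le hq2 (min_le_left _ _)⟩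
          have h1 : Q.toReal < r q ω := hsub hqIco
          have h2 : ENNReal.ofReal (r q ω) ≤ Q :=
            le_iSup (fun p : {q : ℚ // (q : ℝ) ∈ Set.Icc t₀ S} =>
              ENNReal.ofReal (r (p : ℝ) ω)) ⟨q, hqIcc⟩
          have h3 : r q ω ≤ Q.toReal := by
            calc r q ω = (ENNReal.ofReal (r q ω)).toReal :=
                  (ENNReal.toReal_ofReal (hr_nonneg _ _)).symm
              _ ≤ Q.toReal := ENNReal.toReal_mono hQ h2
          linarith
        calc ENNReal.ofReal (r u ω) ≤ ENNReal.ofReal Q.toReal :=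
              ENNReal.ofReal_le_ofReal hle
          _ = Q := ENNReal.ofReal_toReal hQ
          _ ≤ Mfun ω := le_sup_right
  have hMint : (∫⁻ ω, Mfun ω ∂μ) < ⊤ := by
    refine lt_of_le_of_lt (lintegral_mono fun ω => ?_) (hr_int S ht₀S)
    refine sup_le ?_ (iSup_le fun q => ?_)
    · exact le_biSup (fun u => ENNReal.ofReal (r u ω)) (⟨ht₀S.le, le_refl S⟩ : S ∈ Set.Icc t₀ S)
    · exact le_biSup (fun u => ENNReal.ofReal (r u ω)) q.2
  set M : Ω → ℝ := fun ω => (Mfun ω).toReal with hMdef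
  have hM_nonneg : ∀ ω, 0 ≤ M ω := fun ω => ENNReal.toReal_nonneg
  have hM_meas : Measurable M := hMfun_meas.ennreal_toReal
  have hM_int : Integrable M μ := by
    refine ⟨hM_meas.aestronglyMeasurable, ?_⟩
    rw [hasFiniteIntegral_iff_ofReal (Eventually.of_forall hM_nonneg)]
    exact lt_of_le_of_lt (lintegral_mono fun ω => ENNReal.ofReal_toReal_le) hMint
  have hΩ₀ : ∀ᵐ ω ∂μ, Mfun ω < ⊤ := ae_lt_top hMfun_meas hMint.ne
  -- pointwise bound on paths
  have hbd : ∀ ω, Mfun ω ≠ ⊤ → ∀ u ∈ Set.Icc t₀ S, r u ω ≤ M ω := by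
    intro ω hω u hu
    calc r u ω = (ENNReal.ofReal (r u ω)).toReal :=
          (ENNReal.toReal_ofReal (hr_nonneg _ _)).symm
      _ ≤ M ω := ENNReal.toReal_mono hω (hMle ω u hu)
  -- interval integrability of paths
  have hintOn : ∀ ω, Mfun ω ≠ ⊤ → ∀ a b : ℝ, t₀ ≤ a → b ≤ S → a ≤ b →
      IntervalIntegrable (fun u => r u ω) MeasureTheory.volume a b := by
    intro ω hω a b ha hb hab
    rw [intervalIntegrable_iff_integrableOn_Ioc_of_le hab]
    refine Measure.integrableOn_of_bounded (M := M ω) measure_Ioc_lt_top.ne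
      (hsec ω).aestronglyMeasurable ?_
    refine (ae_restrict_iff' measurableSet_Ioc).2 (Eventually.of_forall fun u hu => ?_)
    rw [Real.norm_eq_abs, abs_of_nonneg (hr_nonneg _ _)]
    exact hbd ω hω u ⟨ha.trans hu.1.le, hu.2.trans hb⟩
  -- measurability of the interval integrals in ω
  have hintmeas : ∀ s : ℝ, t ≤ s → Measurable fun ω => ∫ u in t..s, r u ω := by
    intro s hts
    have heq : (fun ω => ∫ u in t..s, r u ω) =
        fun ω => ∫ u in Set.Ioc t s, r u ω ∂MeasureTheory.volume := by
      funext ω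
      rw [intervalIntegral.integral_of_le hts]
    rw [heq]
    have : StronglyMeasurable fun p : Ω × ℝ => r p.2 p.1 :=
      (hr_meas.comp (measurable_snd.prodMk measurable_fst)).stronglyMeasurable
    exact (this.integral_prod_right' (ν := MeasureTheory.volume.restrict (Set.Ioc t s))).measurable
  -- the functions
  set X : ℕ → Ω → ℝ := fun n ω => Real.exp (-∫ u in t..(T + h n), r u ω) with hXdef
  set X0 : Ω → ℝ := fun ω => Real.exp (-∫ u in t..T, r u ω) with hX0def
  set Y : Ω → ℝ := fun ω => r T ω * Real.exp (-∫ u in t..T, r u ω) with hYdef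
  set F : ℕ → Ω → ℝ := fun n ω => (1 / h n) * (X n ω - X0 ω) with hFdef
  set Fl : Ω → ℝ := fun ω => -(Y ω) with hFldef
  have hX_meas : ∀ n, Measurable (X n) := fun n =>
    Real.measurable_exp.comp (hintmeas (T + h n) (htT.trans (le_add_of_nonneg_right (hpos n).le))).neg
  have hX0_meas : Measurable X0 := Real.measurable_exp.comp (hintmeas T htT).neg
  have hY_meas : Measurable Y := (hsecω T).mul hX0_meas
  have hF_meas : ∀ n, Measurable (F n) := fun n =>
    ((hX_meas n).sub hX0_meas).const_mul _
  -- domination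
  have hdom : ∀ n, ∀ᵐ ω ∂μ, |F n ω| ≤ M ω := by
    intro n
    filter_upwards [hΩ₀] with ω hω
    have hωne : Mfun ω ≠ ⊤ := hω.ne
    set a : ℝ := ∫ u in t..T, r u ω with hadef
    set b : ℝ := ∫ u in T..(T + h n), r u ω with hbdef
    have hint1 : IntervalIntegrable (fun u => r u ω) MeasureTheory.volume t T :=
      hintOn ω hωne t T ht₀ hTS htT
    have hint2 : IntervalIntegrable (fun u => r u ω) MeasureTheory.volume T (T + h n) :=
      hintOn ω hωne T (T + h n) ht₀T (hTh n) (le_add_of_nonneg_right (hpos n).le)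
    have hsplit : a + b = ∫ u in t..(T + h n), r u ω :=
      intervalIntegral.integral_add_adjacent_intervals hint1 hint2
    have ha : 0 ≤ a := intervalIntegral.integral_nonneg htT fun u _ => hr_nonneg u ω
    have hb0 : 0 ≤ b := intervalIntegral.integral_nonneg
      (le_add_of_nonneg_right (hpos n).le) fun u _ => hr_nonneg u ω
    have hbM : b ≤ h n * M ω := by
      have h1 : b ≤ ∫ _u in T..(T + h n), M ω :=
        intervalIntegral.integral_mono_on (le_add_of_nonneg_right (hpos n).le)
          hint2 intervalIntegrable_const fun u hu =>
          hbd ω hωne u ⟨ht₀T.trans hu.1, hu.2.trans (hTh n)⟩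
      have h2 : (∫ _u in T..(T + h n), M ω) = h n * M ω := by
        rw [intervalIntegral.integral_const]
        simp [smul_eq_mul]
      linarith [h1, h2.symm.le]
    have hXn : X n ω = Real.exp (-(a + b)) := by rw [hXdef]; simp only [hsplit]
    have hX0' : X0 ω = Real.exp (-a) := rfl
    have e1 : Real.exp (-(a + b)) = Real.exp (-a) * Real.exp (-b) := by
      rw [← Real.exp_add]; ring_nf
    have e2 : Real.exp (-a) ≤ 1 := Real.exp_le_one_iff.2 (by linarith)
    have e3 : Real.exp (-b) ≤ 1 := Real.exp_le_one_iff.2 (by linarith)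
    have e4 : 1 - Real.exp (-b) ≤ b := by
      have := Real.add_one_le_exp (-b); linarith
    have e5 : 0 < Real.exp (-a) := Real.exp_pos _
    have e6 : 0 < Real.exp (-b) := Real.exp_pos _
    have key : |X n ω - X0 ω| ≤ h n * M ω := by
      rw [hXn, hX0', e1, abs_of_nonpos (by nlinarith)]
      nlinarith
    have habs : |F n ω| = (1 / h n) * |X n ω - X0 ω| := by
      show |1 / h n * (X n ω - X0 ω)| = _
      rw [abs_mul, abs_of_pos (one_div_pos.2 (hpos n))]
    rw [habs]
    have hh0 : h n ≠ 0 := (hpos n).ne'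
    calc (1 / h n) * |X n ω - X0 ω| ≤ (1 / h n) * (h n * M ω) :=
          mul_le_mul_of_nonneg_left key (le_of_lt (one_div_pos.2 (hpos n)))
      _ = M ω := by field_simp
  -- pointwise convergence
  have hconv : ∀ᵐ ω ∂μ, Tendsto (fun n => F n ω) atTop (nhds (Fl ω)) := by
    filter_upwards [hΩ₀] with ω hω
    have hωne : Mfun ω ≠ ⊤ := hω.ne
    set A : ℝ → ℝ := fun s => ∫ u in t..s, r u ω with hAdef
    have hAint : IntervalIntegrable (fun u => r u ω) MeasureTheory.volume t T :=
      hintOn ω hωne t T ht₀ hTS htT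
    have hAderiv : HasDerivWithinAt A (r T ω) (Set.Ici T) T :=
      intervalIntegral.integral_hasDerivWithinAt_right (s := Set.Ici T) (t := Set.Ioi T) hAint
        (hsec ω).stronglyMeasurable.aestronglyMeasurable.stronglyMeasurableAtFilter
        ((hr_rightcont ω T ht₀T).mono Set.Ioi_subset_Ici_self)
    have hEderiv : HasDerivWithinAt (fun s => Real.exp (-A s))
        (Real.exp (-A T) * -(r T ω)) (Set.Ici T) T :=
      by have := (Real.hasDerivAt_exp (-A T)).comp_hasDerivWithinAt T hAderiv.neg; exact this
    rw [hasDerivWithinAt_iff_tendsto_slope] at hEderiv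
    have hseq : Tendsto (fun n => T + h n) atTop
        (nhdsWithin T (Set.Ici T \ {T})) := by
      refine tendsto_nhdsWithin_of_tendsto_nhds_of_eventually_within _ ?_ ?_
      · have : Tendsto (fun n => T + h n) atTop (nhds (T + 0)) :=
          tendsto_const_nhds.add hlim
        simpa using this
      · refine Eventually.of_forall fun n => ⟨le_add_of_nonneg_right (hpos n).le, ?_⟩
        simp only [Set.mem_singleton_iff]
        intro hcon
        have := hpos n
        nlinarith [hcon]
    have htend := hEderiv.comp hseq
    have heq : ∀ n, slope (fun s => Real.exp (-A s)) T (T + h n) = F n ω := by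
      intro n
      rw [slope_def_field]
      show (Real.exp (-A (T + h n)) - Real.exp (-A T)) / (T + h n - T) =
        1 / h n * (Real.exp (-A (T + h n)) - Real.exp (-A T))
      rw [show T + h n - T = h n by ring]
      exact (one_div_mul_eq_div _ _).symm
    have hFlval : Fl ω = Real.exp (-A T) * -(r T ω) := by
      show -(r T ω * Real.exp (-A T)) = Real.exp (-A T) * -(r T ω)
      ring
    rw [hFlval]
    exact htend.congr heq
  -- apply the conditional dominated convergence
  have hmain := aux_tendsto_condexp μ m hm F Fl M
    (fun n => (hF_meas n).aestronglyMeasurable) hM_int hdom hconv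
  -- integrability of the pieces
  have hX_int : ∀ n, Integrable (X n) μ := by
    intro n
    refine Integrable.mono' (integrable_const 1) (hX_meas n).aestronglyMeasurable
      (Eventually.of_forall fun ω => ?_)
    rw [Real.norm_eq_abs, hXdef]
    simp only
    rw [abs_of_pos (Real.exp_pos _)]
    exact Real.exp_le_one_iff.2 (neg_nonpos.2 (intervalIntegral.integral_nonneg
      (htT.trans (le_add_of_nonneg_right (hpos n).le)) fun u _ => hr_nonneg u ω))
  have hX0_int : Integrable X0 μ := by
    refine Integrable.mono' (integrable_const 1) hX0_meas.aestronglyMeasurable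
      (Eventually.of_forall fun ω => ?_)
    rw [Real.norm_eq_abs, hX0def]
    simp only
    rw [abs_of_pos (Real.exp_pos _)]
    exact Real.exp_le_one_iff.2 (neg_nonpos.2 (intervalIntegral.integral_nonneg htT
      fun u _ => hr_nonneg u ω))
  have hY_int : Integrable Y μ := by
    refine Integrable.mono' hM_int hY_meas.aestronglyMeasurable ?_
    filter_upwards [hΩ₀] with ω hω
    rw [Real.norm_eq_abs, hYdef]
    simp only
    rw [abs_mul, abs_of_nonneg (hr_nonneg T ω), abs_of_pos (Real.exp_pos _)]
    have h1 : r T ω ≤ M ω := hbd ω hω.ne T ⟨ht₀T, hTS⟩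
    have h2 : Real.exp (-∫ u in t..T, r u ω) ≤ 1 :=
      Real.exp_le_one_iff.2 (neg_nonpos.2 (intervalIntegral.integral_nonneg htT
        fun u _ => hr_nonneg u ω))
    nlinarith [hr_nonneg T ω, Real.exp_pos (-∫ u in t..T, r u ω)]
  -- identify the conditional expectations
  have heq1 : ∀ n, μ[F n|m] =ᵐ[μ]
      fun ω => (1 / h n) * ((μ[X n|m]) ω - (μ[X0|m]) ω) := by
    intro n
    have e1 : F n = (1 / h n) • (X n - X0) := by
      funext ω; simp [hFdef, smul_eq_mul]
    have e2 : μ[F n|m] =ᵐ[μ] (1 / h n) • μ[X n - X0|m] := by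
      rw [e1]; exact condExp_smul _ _ _
    have e3 : μ[X n - X0|m] =ᵐ[μ] μ[X n|m] - μ[X0|m] := condExp_sub (hX_int n) hX0_int m
    filter_upwards [e2, e3] with ω k1 k2
    rw [k1]
    simp only [Pi.smul_apply, smul_eq_mul]
    rw [k2]
    simp [Pi.sub_apply]
  have heq2 : μ[Fl|m] =ᵐ[μ] -μ[Y|m] := by
    have : Fl = -Y := by funext ω; simp [hFldef]
    rw [this]; exact condExp_neg _ _
  filter_upwards [hmain, ae_all_iff.2 heq1, heq2] with ω h1 h2 h3
  have h4 : Tendsto (fun n => (1 / h n) * ((μ[X n|m]) ω - (μ[X0|m]) ω)) atTop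
      (nhds ((μ[Fl|m]) ω)) := h1.congr fun n => h2 n
  rw [h3] at h4
  simpa using h4

theorem bond_wrapper
    {Ω : Type*} {m0 : MeasurableSpace Ω} (μ : Measure Ω) [IsProbabilityMeasure μ]
    (m : MeasurableSpace Ω)
    (t₀ t T : ℝ) (ht₀ : t₀ ≤ t) (htT : t ≤ T)
    (r : ℝ → Ω → ℝ)
    (hr_meas : @Measurable (ℝ × Ω) ℝ
      (@Prod.instMeasurableSpace ℝ Ω Real.measurableSpace m) Real.measurableSpace
      (Function.uncurry r))
    (hr_nonneg : ∀ u ω, 0 ≤ r u ω)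
    (hr_rightcont : ∀ ω : Ω, ∀ u ≥ t₀,
      ContinuousWithinAt (fun v => r v ω) (Set.Ici u) u)
    (hr_int : ∀ S > t₀,
      (∫⁻ ω, ⨆ u ∈ Set.Icc t₀ S, ENNReal.ofReal (r u ω) ∂μ) < ⊤) :
    ∀ h : ℕ → ℝ, (∀ n, 0 < h n) → Tendsto h atTop (nhds 0) →
      ∀ᵐ ω ∂μ, Tendsto (fun n =>
        (1 / h n) *
          ((μ[fun ω' => Real.exp (-∫ u in t..(T + h n), r u ω')|m]) ω -
            (μ[fun ω' => Real.exp (-∫ u in t..T, r u ω')|m]) ω))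
        atTop
        (nhds (-(μ[fun ω' => r T ω' * Real.exp (-∫ u in t..T, r u ω')|m]) ω)) := by
  intro h hpos hlim
  by_cases hle : m ≤ m0
  · have prodle : (@Prod.instMeasurableSpace ℝ Ω Real.measurableSpace m) ≤
        (@Prod.instMeasurableSpace ℝ Ω Real.measurableSpace m0) :=
      sup_le_sup le_rfl (MeasurableSpace.comap_mono hle)
    exact bond_aux (m0 := m0) m hle μ t₀ t T ht₀ htT r (hr_meas.mono prodle le_rfl)
      hr_nonneg hr_rightcont hr_int h hpos hlim
  · simp only [condExp_of_not_le hle]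
    refine Eventually.of_forall fun ω => ?_
    simpa using tendsto_const_nhds

/-- right-differentiability in the maturity of the conditional bond
price functional: for a nonnegative jointly measurable process r with
right-continuous paths and E[sup_{u∈[t₀,S]} r(u)] < ∞ for every S > t₀, and any
positive sequence hₙ → 0, almost surely
(1/hₙ)·( E[exp(−∫ₜ^{T+hₙ} r du)|𝓖] − E[exp(−∫ₜ^T r du)|𝓖] )
  → −E[ r(T)·exp(−∫ₜ^T r du) | 𝓖 ]. -/
theorem bond_price_maturity_derivative
    {Ω : Type*} (m : MeasurableSpace Ω) [MeasurableSpace Ω] (μ : Measure Ω) [IsProbabilityMeasure μ]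
    (hm : m ≤ ‹MeasurableSpace Ω›)
    (t₀ t T : ℝ) (ht₀ : t₀ ≤ t) (htT : t ≤ T)
    (r : ℝ → Ω → ℝ)
    (hr_meas : Measurable (Function.uncurry r))
    (hr_nonneg : ∀ u ω, 0 ≤ r u ω)
    (hr_rightcont : ∀ ω : Ω, ∀ u ≥ t₀,
      ContinuousWithinAt (fun v => r v ω) (Set.Ici u) u)
    (hr_int : ∀ S > t₀,
      (∫⁻ ω, ⨆ u ∈ Set.Icc t₀ S, ENNReal.ofReal (r u ω) ∂μ) < ⊤) :
    ∀ h : ℕ → ℝ, (∀ n, 0 < h n) → Tendsto h atTop (nhds 0) →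
      ∀ᵐ ω ∂μ, Tendsto (fun n =>
        (1 / h n) *
          ((μ[fun ω' => Real.exp (-∫ u in t..(T + h n), r u ω')|m]) ω -
            (μ[fun ω' => Real.exp (-∫ u in t..T, r u ω')|m]) ω))
        atTop
        (nhds (-(μ[fun ω' => r T ω' * Real.exp (-∫ u in t..T, r u ω')|m]) ω)) := by
  exact bond_aux m hm μ t₀ t T ht₀ htT r hr_meas hr_nonneg hr_rightcont hr_int
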